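/- Let M be a complex N × N matrix with singular value decomposition M = UΣV where rank(M) = r. For any unit-norm computational basis vector |x⟩, writing |φ⟩ = c·ΣV|x⟩ with c a nonzero normalizing constant, the vector ΣV|x⟩ has at most r nonzero entries, and for any basis vector |y⟩, ⟨y|U|φ⟩ = c·M[y,x]; hence |⟨y|U|φ⟩|² > 0 if and only if M[y,x] ≠ 0. -/
import Mathlib


open scoped Classical in
/-- Correctness of de Wolf's nondeterministic quantum protocol: for `M = U Σ V`
with `U, V` unitary, `Σ` diagonal with `r = rank M` nonzero diagonal entries, the
vector `Σ V |x⟩` has at most `r` nonzero entries, `⟨y| U (c • Σ V |x⟩) = c · M[y,x]`,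
and this amplitude is nonzero iff `M[y,x] ≠ 0`. -/
theorem svd_protocol_correctness {N r : ℕ}
    (M U S V : Matrix (Fin N) (Fin N) ℂ)
    (hU : U ∈ Matrix.unitaryGroup (Fin N) ℂ)
    (hV : V ∈ Matrix.unitaryGroup (Fin N) ℂ)
    (hSdiag : ∀ i j, i ≠ j → S i j = 0)
    (hM : M = U * S * V)
    (hrank : M.rank = r)
    (hcard : (Finset.univ.filter (fun i => S i i ≠ 0)).card = r)
    (x : Fin N) (c : ℂ) (hc : c ≠ 0) :
    (Finset.univ.filter
        (fun i => ((S * V).mulVec (Pi.single x 1)) i ≠ 0)).card ≤ r ∧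
    (∀ y, U.mulVec (c • (S * V).mulVec (Pi.single x 1)) y = c * M y x) ∧
    (∀ y, U.mulVec (c • (S * V).mulVec (Pi.single x 1)) y ≠ 0 ↔ M y x ≠ 0) := by
  have hvec : (S * V).mulVec (Pi.single x 1) = fun i => (S * V) i x := by
    funext i
    simp [Matrix.mulVec_single]
  have hamp : ∀ y, U.mulVec (c • (S * V).mulVec (Pi.single x 1)) y = c * M y x := by
    intro y
    rw [Matrix.mulVec_smul, hvec]
    have : U.mulVec (fun i => (S * V) i x) y = (U * (S * V)) y x := by
      simp [Matrix.mul_apply, Matrix.mulVec, dotProduct]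
    simp only [Pi.smul_apply, this, hM, Matrix.mul_assoc, smul_eq_mul]
  refine ⟨?_, hamp, fun y => ?_⟩
  · rw [← hcard]
    apply Finset.card_le_card
    intro i hi
    simp only [Finset.mem_filter, Finset.mem_univ, true_and] at hi ⊢
    intro hS
    apply hi
    rw [hvec]
    have : (S * V) i x = ∑ k, S i k * V k x := Matrix.mul_apply
    show (S * V) i x = 0
    rw [this]
    apply Finset.sum_eq_zero
    intro k _
    by_cases hik : i = k
    · subst hik; rw [hS, zero_mul]
    · rw [hSdiag i k hik, zero_mul]
  · rw [hamp y]
    simp [hc]
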